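/- TVD property of the semi-discrete first-order Kurganov–Tadmor scheme. Let N ≥ 1, Δx > 0, let f : ℝ → ℝ be continuously differentiable, let v : ℝ → (ZMod N → ℝ) be differentiable in t, and let a : ℝ → (ZMod N → ℝ) be continuous and satisfy, for all t and j, a_j(t) ≥ |f′(ξ)| for every ξ between min(v_j(t), v_{j+1}(t)) and max(v_j(t), v_{j+1}(t)). Suppose v solves d(v_j)/dt = −(1/(2Δx))·(f(v_{j+1}) − f(v_{j−1})) + (1/(2Δx))·(a_j·(v_{j+1} − v_j) − a_{j−1}·(v_j − v_{j−1})) for every j ∈ ZMod N. Then the total variation TV(v(t)) = Σ_{j ∈ ZMod N} |v_{j+1}(t) − v_j(t)| is a nonincreasing function of t. -/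

import Mathlib

open Set Filter

/-! Write `w_j = v_{j+1} - v_j` and let `c_j` be the divided difference of `f` between `v_j`
and `v_{j+1}`. The scheme puts the increments into Harten's incremental form
`w_j' = D_{j+1} w_{j+1} - (C_j + D_j) w_j + C_{j-1} w_{j-1}` with `C_j, D_j = (a_j ± c_j)/(2Δx)`,
which are nonnegative because `|c_j| ≤ a_j` by the mean value theorem. Pairing with a sign `s_j`
of `w_j` and summing over the periodic grid, the shifted sums cancel, so the right derivative of
the total variation is nonpositive; a continuous function with nonpositive right derivatives
is antitone. -/

theorem HasDerivAt.exists_hasDerivWithinAt_abs_Ici {w : ℝ → ℝ} {w' t : ℝ}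
    (hw : HasDerivAt w w' t) :
    ∃ s : ℝ, |s| ≤ 1 ∧ s * w t = |w t| ∧
      HasDerivWithinAt (fun x => |w x|) (s * w') (Ici t) t := by
  rcases lt_trichotomy (w t) 0 with hneg | hzero | hpos
  · exact ⟨-1, by norm_num, by rw [abs_of_neg hneg]; ring,
      ((hasDerivAt_abs_neg hneg).comp t hw).hasDerivWithinAt⟩
  · refine ⟨SignType.sign w', ?_, by simp [hzero], ?_⟩
    · rcases lt_trichotomy w' 0 with h | h | h <;> simp [h]
    -- at a zero of `w`, the right slopes of `|w|` are the absolute values of those of `w`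
    rw [← hasDerivWithinAt_Ioi_iff_Ici, hasDerivWithinAt_iff_tendsto_slope' self_notMem_Ioi,
      sign_mul_self]
    have hslope := (hasDerivWithinAt_iff_tendsto_slope' self_notMem_Ioi).1
      (hw.hasDerivWithinAt (s := Ioi t))
    refine hslope.abs.congr' (eventually_nhdsWithin_of_forall fun x (hx : t < x) => ?_)
    simp [slope_def_field, hzero, abs_div, abs_of_pos (sub_pos.2 hx)]
  · exact ⟨1, by norm_num, by rw [abs_of_pos hpos, one_mul],
      ((hasDerivAt_abs_pos hpos).comp t hw).hasDerivWithinAt⟩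

theorem antitone_of_hasDerivWithinAt_Ici_nonpos {g : ℝ → ℝ} (hcont : Continuous g)
    (hderiv : ∀ t, ∃ g' ≤ 0, HasDerivWithinAt g g' (Ici t) t) : Antitone g := by
  choose g' hg'_nonpos hg' using hderiv
  intro a b hab
  exact image_le_of_deriv_right_le_deriv_boundary (B := fun _ => g a) hcont.continuousOn
    (fun x _ => hg' x) le_rfl continuousOn_const (fun x _ => hasDerivWithinAt_const x (Ici x) (g a))
    (fun x _ => hg'_nonpos x) ⟨hab, le_rfl⟩

theorem exists_sub_eq_mul_sub_of_abs_deriv_le {f : ℝ → ℝ} (hf : Differentiable ℝ f)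
    {x y A : ℝ} (hA : ∀ ξ ∈ uIcc x y, |deriv f ξ| ≤ A) :
    ∃ c, |c| ≤ A ∧ f y - f x = c * (y - x) := by
  by_cases hxy : x = y
  · exact ⟨deriv f x, hA x left_mem_uIcc, by simp [hxy]⟩
  have hyx : y - x ≠ 0 := sub_ne_zero.2 (Ne.symm hxy)
  refine ⟨(f y - f x) / (y - x), ?_, (div_mul_cancel₀ _ hyx).symm⟩
  rw [abs_div, div_le_iff₀ (abs_pos.2 hyx)]
  exact Convex.norm_image_sub_le_of_norm_deriv_le (fun ξ _ => hf ξ) hA (convex_uIcc x y)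
    left_mem_uIcc right_mem_uIcc

theorem mul_mul_le_mul_abs {s c x : ℝ} (hs : |s| ≤ 1) (hc : 0 ≤ c) : s * (c * x) ≤ c * |x| :=
  calc s * (c * x) ≤ |s * (c * x)| := le_abs_self _
    _ = |s| * (c * |x|) := by rw [abs_mul, abs_mul, abs_of_nonneg hc]
    _ ≤ c * |x| := mul_le_of_le_one_left (by positivity) hs

section Grid

variable {N : ℕ}

noncomputable def kurganovTadmorRHS (f : ℝ → ℝ) (Δx : ℝ) (a u : ZMod N → ℝ) (j : ZMod N) : ℝ :=
  -(1 / (2 * Δx)) * (f (u (j + 1)) - f (u (j - 1))) +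
    (1 / (2 * Δx)) * (a j * (u (j + 1) - u j) - a (j - 1) * (u j - u (j - 1)))

noncomputable def hartenForm (C D w : ZMod N → ℝ) (j : ZMod N) : ℝ :=
  D (j + 1) * w (j + 1) - (C j + D j) * w j + C (j - 1) * w (j - 1)

theorem kurganovTadmorRHS_sub_eq_hartenForm (f : ℝ → ℝ) (Δx : ℝ) (a c u : ZMod N → ℝ)
    (hc : ∀ j, f (u (j + 1)) - f (u j) = c j * (u (j + 1) - u j)) (j : ZMod N) :
    kurganovTadmorRHS f Δx a u (j + 1) - kurganovTadmorRHS f Δx a u j =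
      hartenForm (fun j => (a j + c j) / (2 * Δx)) (fun j => (a j - c j) / (2 * Δx))
        (fun j => u (j + 1) - u j) j := by
  have hprev := hc (j - 1)
  simp only [sub_add_cancel] at hprev
  simp only [kurganovTadmorRHS, hartenForm, add_sub_cancel_right, sub_add_cancel]
  linear_combination (1 / (2 * Δx)) * hprev - (1 / (2 * Δx)) * hc (j + 1)

theorem sum_mul_hartenForm_nonpos [NeZero N] {C D w s : ZMod N → ℝ} (hC : ∀ j, 0 ≤ C j)
    (hD : ∀ j, 0 ≤ D j) (hs : ∀ j, |s j| ≤ 1) (hsw : ∀ j, s j * w j = |w j|) :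
    ∑ j, s j * hartenForm C D w j ≤ 0 := by
  have shift_add : ∑ j, D (j + 1) * |w (j + 1)| = ∑ j, D j * |w j| :=
    Equiv.sum_comp (Equiv.addRight 1) fun j => D j * |w j|
  have shift_sub : ∑ j, C (j - 1) * |w (j - 1)| = ∑ j, C j * |w j| :=
    Equiv.sum_comp (Equiv.subRight 1) fun j => C j * |w j|
  calc ∑ j, s j * hartenForm C D w j
      ≤ ∑ j, (D (j + 1) * |w (j + 1)| - (C j + D j) * |w j| + C (j - 1) * |w (j - 1)|) := by
        refine Finset.sum_le_sum fun j _ => ?_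
        have h₁ := mul_mul_le_mul_abs (x := w (j + 1)) (hs j) (hD (j + 1))
        have h₂ := mul_mul_le_mul_abs (x := w (j - 1)) (hs j) (hC (j - 1))
        have h₀ : s j * ((C j + D j) * w j) = (C j + D j) * |w j| := by
          rw [← hsw j]; ring
        simp only [hartenForm]
        linarith
    _ = 0 := by
        simp only [Finset.sum_add_distrib, Finset.sum_sub_distrib, shift_add, shift_sub, add_mul]
        ring

end Grid

theorem KT_first_order_TVD_general (N : ℕ) [NeZero N] (Δx : ℝ) (hΔx : 0 < Δx)
    (f : ℝ → ℝ) (hf : ContDiff ℝ 1 f)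
    (v a : ℝ → ZMod N → ℝ)
    (haBound : ∀ (t : ℝ) (j : ZMod N) (ξ : ℝ),
      min (v t j) (v t (j + 1)) ≤ ξ → ξ ≤ max (v t j) (v t (j + 1)) →
      |deriv f ξ| ≤ a t j)
    (hode : ∀ (t : ℝ) (j : ZMod N),
      HasDerivAt (fun s => v s j)
        (-(1 / (2 * Δx)) * (f (v t (j + 1)) - f (v t (j - 1))) +
          (1 / (2 * Δx)) *
            (a t j * (v t (j + 1) - v t j) -
              a t (j - 1) * (v t j - v t (j - 1)))) t) :
    Antitone (fun t => ∑ j : ZMod N, |v t (j + 1) - v t j|) := by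
  have hv : ∀ j, Continuous fun t => v t j := fun j =>
    continuous_iff_continuousAt.2 fun t => (hode t j).continuousAt
  refine antitone_of_hasDerivWithinAt_Ici_nonpos
    (continuous_finsetSum _ fun j _ => ((hv (j + 1)).sub (hv j)).abs) fun t => ?_
  choose c hca hc using fun j => exists_sub_eq_mul_sub_of_abs_deriv_le
    (hf.differentiable one_ne_zero) (fun ξ hξ => haBound t j ξ hξ.1 hξ.2)
  have hincr : ∀ j, HasDerivAt (fun s => v s (j + 1) - v s j)
      (hartenForm (fun j => (a t j + c j) / (2 * Δx)) (fun j => (a t j - c j) / (2 * Δx))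
        (fun j => v t (j + 1) - v t j) j) t := fun j =>
    ((hode t (j + 1)).sub (hode t j)).congr_deriv
      (kurganovTadmorRHS_sub_eq_hartenForm f Δx (a t) c (v t) hc j)
  choose s hs hsw hs_deriv using fun j => (hincr j).exists_hasDerivWithinAt_abs_Ici
  refine ⟨_, sum_mul_hartenForm_nonpos (fun j => ?_) (fun j => ?_) hs hsw,
    HasDerivWithinAt.fun_sum fun j _ => hs_deriv j⟩ <;>
  · have := abs_le.1 (hca j)
    exact div_nonneg (by linarith) (by positivity)

/-- TVD property of the semi-discrete first-order Kurganov–Tadmor scheme on a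
periodic grid: if the local speeds `aⱼ(t)` dominate `|f′|` between neighbouring
cell values and `v` solves the dissipative-form scheme
`d vⱼ/dt = −(f(v_{j+1}) − f(v_{j−1}))/(2Δx)
          + (aⱼ(v_{j+1} − vⱼ) − a_{j−1}(vⱼ − v_{j−1}))/(2Δx)`,
then the total variation `Σⱼ |v_{j+1}(t) − vⱼ(t)|` is nonincreasing in `t`. -/
theorem KT_first_order_TVD (N : ℕ) [NeZero N] (Δx : ℝ) (hΔx : 0 < Δx)
    (f : ℝ → ℝ) (hf : ContDiff ℝ 1 f)
    (v a : ℝ → ZMod N → ℝ)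
    (hv : ∀ j : ZMod N, Differentiable ℝ (fun t => v t j))
    (hacont : ∀ j : ZMod N, Continuous (fun t => a t j))
    (haBound : ∀ (t : ℝ) (j : ZMod N) (ξ : ℝ),
      min (v t j) (v t (j + 1)) ≤ ξ → ξ ≤ max (v t j) (v t (j + 1)) →
      |deriv f ξ| ≤ a t j)
    (hode : ∀ (t : ℝ) (j : ZMod N),
      HasDerivAt (fun s => v s j)
        (-(1 / (2 * Δx)) * (f (v t (j + 1)) - f (v t (j - 1))) +
          (1 / (2 * Δx)) *
            (a t j * (v t (j + 1) - v t j) -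
              a t (j - 1) * (v t j - v t (j - 1)))) t) :
    Antitone (fun t => ∑ j : ZMod N, |v t (j + 1) - v t j|) :=
  KT_first_order_TVD_general N Δx hΔx f hf v a haBound hode
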